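/- arXiv:2604.23024 — 10 statements merged into one kernel-verified Lean document; each statement's English description precedes it below -/
import Mathlib

section
/- Let $d>0$, $\phi\in[-\pi,\pi]$, and define $\vartheta(\phi) = -\phi/3$ if $-\pi\le\phi<0$, $\vartheta(\phi)=\phi$ if $0\le\phi\le\pi/2$, and $\vartheta(\phi)=(2\pi-\phi)/3$ if $\pi/2<\phi\le\pi$. Then for all complex numbers $s,t$: $\mathrm{Re}\left(e^{-i\phi}\frac{(\overline{s}+i\overline{t})(s+it)}{1+id}\right) \le \cos\vartheta(\phi)\,|s|^2 + \sin\vartheta(\phi)\,\frac{|t|^2}{d}$. -/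
open Complex Real

/-- The angle `ϑ(φ)` from the two-dimensional domination lemma. -/
noncomputable def vartheta (φ : ℝ) : ℝ :=
  if φ < 0 then -φ / 3 else if φ ≤ Real.pi / 2 then φ else (2 * Real.pi - φ) / 3

private lemma core_dom (d M N P a b u v : ℝ) (hd : 0 < d) (hM : 0 ≤ M) (hN : 0 ≤ N)
    (h : d * P ^ 2 ≤ M * N) :
    2 * (d * P) * (a * u + b * v) ≤ d * M * (a ^ 2 + b ^ 2) + N * (u ^ 2 + v ^ 2) := by
  rcases eq_or_lt_of_le hN with h0 | hNpos
  · have hP : P = 0 := by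
      have h1 : d * P ^ 2 ≤ 0 := by nlinarith
      have h2 : d * P ^ 2 = 0 := le_antisymm h1 (mul_nonneg hd.le (sq_nonneg P))
      rcases mul_eq_zero.1 h2 with h3 | h3
      · exact absurd h3 hd.ne'
      · exact pow_eq_zero_iff two_ne_zero |>.1 h3
    rw [hP, ← h0]
    nlinarith [mul_nonneg hd.le hM, sq_nonneg a, sq_nonneg b]
  · nlinarith [sq_nonneg (d * P * a - N * u), sq_nonneg (d * P * b - N * v),
      mul_nonneg (mul_nonneg hd.le (sub_nonneg.2 h)) (add_nonneg (sq_nonneg a) (sq_nonneg b)),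
      hNpos]

private lemma main_real (d c s₁ C S a b u v : ℝ) (hd : 0 < d)
    (hM : 0 ≤ (1 + d ^ 2) * C - c + d * s₁)
    (hN : 0 ≤ (1 + d ^ 2) * S + d * c - d ^ 2 * s₁)
    (hP : d * (s₁ + d * c) ^ 2 ≤
      ((1 + d ^ 2) * C - c + d * s₁) * ((1 + d ^ 2) * S + d * c - d ^ 2 * s₁)) :
    ((c - d * s₁) * (a ^ 2 + b ^ 2 - u ^ 2 - v ^ 2) + 2 * (s₁ + d * c) * (a * u + b * v)) /
      (1 + d ^ 2) ≤ C * (a ^ 2 + b ^ 2) + S * ((u ^ 2 + v ^ 2) / d) := by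
  have hd2 : (0:ℝ) < 1 + d ^ 2 := by positivity
  have key := core_dom d ((1 + d ^ 2) * C - c + d * s₁) ((1 + d ^ 2) * S + d * c - d ^ 2 * s₁)
    (s₁ + d * c) a b u v hd hM hN hP
  have hrhs : C * (a ^ 2 + b ^ 2) + S * ((u ^ 2 + v ^ 2) / d)
      = (C * (a ^ 2 + b ^ 2) * d + S * (u ^ 2 + v ^ 2)) / d := by
    field_simp
  rw [hrhs, div_le_div_iff₀ hd2 hd]
  nlinarith [key]

private lemma MNP_dom (d C S : ℝ) (hd : 0 < d) (hC : 0 ≤ C) (hS : 0 ≤ S)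
    (h1 : C ^ 2 + S ^ 2 = 1) :
    0 ≤ (1 + d ^ 2) * C - (4 * C ^ 3 - 3 * C) + d * (4 * S ^ 3 - 3 * S) ∧
    0 ≤ (1 + d ^ 2) * S + d * (4 * C ^ 3 - 3 * C) - d ^ 2 * (4 * S ^ 3 - 3 * S) ∧
    d * ((4 * S ^ 3 - 3 * S) + d * (4 * C ^ 3 - 3 * C)) ^ 2 ≤
      ((1 + d ^ 2) * C - (4 * C ^ 3 - 3 * C) + d * (4 * S ^ 3 - 3 * S)) *
      ((1 + d ^ 2) * S + d * (4 * C ^ 3 - 3 * C) - d ^ 2 * (4 * S ^ 3 - 3 * S)) := by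
  have hC1 : C ≤ 1 := by nlinarith
  have hS1 : S ≤ 1 := by nlinarith
  have hMeq : (1 + d ^ 2) * C - (4 * C ^ 3 - 3 * C) + d * (4 * S ^ 3 - 3 * S)
      = 4 * C * S ^ 2 + C * d ^ 2 + d * S * (1 - 4 * C ^ 2) := by
    linear_combination (4 * d * S - 4 * C) * h1
  have hNeq : (1 + d ^ 2) * S + d * (4 * C ^ 3 - 3 * C) - d ^ 2 * (4 * S ^ 3 - 3 * S)
      = S * (1 - 2 * d * C) ^ 2 + d * C * (4 * S + 1 - 4 * S ^ 2) := by
    linear_combination (4 * d * C - 4 * d ^ 2 * S) * h1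
  have hM : 0 ≤ (1 + d ^ 2) * C - (4 * C ^ 3 - 3 * C) + d * (4 * S ^ 3 - 3 * S) := by
    rw [hMeq]
    rcases le_or_gt (4 * C ^ 2) 1 with h | h
    · have := mul_nonneg (mul_nonneg hd.le hS) (by linarith : (0:ℝ) ≤ 1 - 4 * C ^ 2)
      nlinarith [mul_nonneg (mul_nonneg hC hS) hS, mul_nonneg hC (sq_nonneg d)]
    · have hCpos : 0 < C := by nlinarith
      nlinarith [sq_nonneg (2 * C * d + S * (1 - 4 * C ^ 2)),
        mul_nonneg (mul_nonneg (mul_nonneg hS hS) hC) (by linarith : (0:ℝ) ≤ 1 - C),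
        mul_nonneg (mul_nonneg (mul_nonneg hS hS) hC) hC]
  refine ⟨hM, ?_, ?_⟩
  · rw [hNeq]
    have h2 : 0 ≤ 4 * S + 1 - 4 * S ^ 2 := by nlinarith
    have := mul_nonneg (mul_nonneg hd.le hC) h2
    nlinarith [mul_nonneg hS (sq_nonneg (1 - 2 * d * C))]
  · have hid : ((1 + d ^ 2) * C - (4 * C ^ 3 - 3 * C) + d * (4 * S ^ 3 - 3 * S)) *
        ((1 + d ^ 2) * S + d * (4 * C ^ 3 - 3 * C) - d ^ 2 * (4 * S ^ 3 - 3 * S)) -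
        d * ((4 * S ^ 3 - 3 * S) + d * (4 * C ^ 3 - 3 * C)) ^ 2
        = 4 * S * C * (S - d * C) ^ 2 * (1 + d ^ 2) := by
      linear_combination (-8 * C * S * d ^ 2 - 4 * C * S * d ^ 4 + 12 * S ^ 2 * d
        + 12 * S ^ 2 * d ^ 3 - 16 * S ^ 4 * d ^ 3 - 16 * S ^ 4 * d - 4 * C * S
        + 12 * C ^ 2 * d + 12 * C ^ 2 * d ^ 3 + 16 * C ^ 2 * S ^ 2 * d ^ 3
        + 16 * C ^ 2 * S ^ 2 * d - 16 * C ^ 4 * d ^ 3 - 16 * C ^ 4 * d) * h1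
    nlinarith [mul_nonneg (mul_nonneg (mul_nonneg hS hC) (sq_nonneg (S - d * C)))
      (by positivity : (0:ℝ) ≤ 1 + d ^ 2), hid]

private lemma re_eq_dom (c₁ s₁ d : ℝ) (s t : ℂ) :
    (((c₁ : ℂ) - (s₁ : ℂ) * Complex.I) *
        ((starRingEnd ℂ s + Complex.I * starRingEnd ℂ t) * (s + Complex.I * t)) /
        (1 + Complex.I * d)).re
    = ((c₁ - d * s₁) * (s.re ^ 2 + s.im ^ 2 - t.re ^ 2 - t.im ^ 2)
        + 2 * (s₁ + d * c₁) * (s.re * t.re + s.im * t.im)) / (1 + d ^ 2) := by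
  rw [Complex.div_re]
  have h : Complex.normSq (1 + Complex.I * (d : ℂ)) = 1 + d ^ 2 := by
    simp [Complex.normSq_apply]; ring
  rw [h]
  simp [Complex.mul_re, Complex.mul_im, Complex.add_re, Complex.add_im,
    Complex.sub_re, Complex.sub_im, Complex.conj_re, Complex.conj_im]
  ring

theorem two_dim_domination (d φ : ℝ) (hd : 0 < d) (hφ₁ : -Real.pi ≤ φ) (hφ₂ : φ ≤ Real.pi)
    (s t : ℂ) :
    (Complex.exp (-(Complex.I * φ)) *
        ((starRingEnd ℂ s + Complex.I * starRingEnd ℂ t) * (s + Complex.I * t)) /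
        (1 + Complex.I * d)).re ≤
      Real.cos (vartheta φ) * ‖s‖ ^ 2 +
        Real.sin (vartheta φ) * (‖t‖ ^ 2 / d) := by
  have hpi := Real.pi_pos
  have hexp : Complex.exp (-(Complex.I * φ)) =
      ((Real.cos φ : ℂ) - (Real.sin φ : ℂ) * Complex.I) := by
    rw [show -(Complex.I * (φ:ℂ)) = ((-φ : ℝ) : ℂ) * Complex.I by push_cast; ring,
      Complex.exp_mul_I, ← Complex.ofReal_cos, ← Complex.ofReal_sin,
      Real.cos_neg, Real.sin_neg]
    push_cast; ring
  have habs_s : ‖s‖ ^ 2 = s.re ^ 2 + s.im ^ 2 := by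
    rw [Complex.sq_norm, Complex.normSq_apply]; ring
  have habs_t : ‖t‖ ^ 2 = t.re ^ 2 + t.im ^ 2 := by
    rw [Complex.sq_norm, Complex.normSq_apply]; ring
  rw [hexp, re_eq_dom, habs_s, habs_t, vartheta]
  split_ifs with h1 h2
  · -- case -π ≤ φ < 0, θ = -φ/3
    set θ := -φ / 3 with hθ
    have hφeq : φ = -(3 * θ) := by rw [hθ]; ring
    have hcos : Real.cos φ = 4 * Real.cos θ ^ 3 - 3 * Real.cos θ := by
      rw [hφeq, Real.cos_neg, Real.cos_three_mul]
    have hsin : Real.sin φ = 4 * Real.sin θ ^ 3 - 3 * Real.sin θ := by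
      rw [hφeq, Real.sin_neg, Real.sin_three_mul]; ring
    have hθ0 : 0 ≤ θ := by rw [hθ]; linarith
    have hθ1 : θ ≤ Real.pi / 3 := by rw [hθ]; linarith
    have hCnn : 0 ≤ Real.cos θ :=
      Real.cos_nonneg_of_mem_Icc ⟨by linarith, by linarith⟩
    have hSnn : 0 ≤ Real.sin θ :=
      Real.sin_nonneg_of_nonneg_of_le_pi hθ0 (by linarith)
    obtain ⟨hM, hN, hP⟩ := MNP_dom d (Real.cos θ) (Real.sin θ) hd hCnn hSnn
      (by rw [← Real.sin_sq_add_cos_sq θ]; ring)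
    refine main_real d (Real.cos φ) (Real.sin φ) (Real.cos θ) (Real.sin θ)
      s.re s.im t.re t.im hd ?_ ?_ ?_ <;> rw [hcos, hsin]
    · exact hM
    · exact hN
    · exact hP
  · -- case 0 ≤ φ ≤ π/2
    push_neg at h1
    have hc : 0 ≤ Real.cos φ := Real.cos_nonneg_of_mem_Icc ⟨by linarith, h2⟩
    have hs : 0 ≤ Real.sin φ := Real.sin_nonneg_of_nonneg_of_le_pi h1 hφ₂
    refine main_real d (Real.cos φ) (Real.sin φ) (Real.cos φ) (Real.sin φ)
      s.re s.im t.re t.im hd ?_ ?_ ?_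
    · nlinarith [mul_nonneg (sq_nonneg d) hc, mul_nonneg hd.le hs]
    · nlinarith [mul_nonneg hd.le hc]
    · apply le_of_eq; ring
  · -- case π/2 < φ ≤ π, θ = (2π - φ)/3
    push_neg at h1 h2
    set θ := (2 * Real.pi - φ) / 3 with hθ
    have hφeq : φ = 2 * Real.pi - 3 * θ := by rw [hθ]; ring
    have hcos : Real.cos φ = 4 * Real.cos θ ^ 3 - 3 * Real.cos θ := by
      rw [hφeq, Real.cos_sub, Real.cos_two_pi, Real.sin_two_pi, Real.cos_three_mul]; ring
    have hsin : Real.sin φ = 4 * Real.sin θ ^ 3 - 3 * Real.sin θ := by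
      rw [hφeq, Real.sin_sub, Real.cos_two_pi, Real.sin_two_pi, Real.sin_three_mul]; ring
    have hθ0 : 0 ≤ θ := by rw [hθ]; linarith
    have hθ1 : θ ≤ Real.pi / 2 := by rw [hθ]; linarith
    have hCnn : 0 ≤ Real.cos θ :=
      Real.cos_nonneg_of_mem_Icc ⟨by linarith, hθ1⟩
    have hSnn : 0 ≤ Real.sin θ :=
      Real.sin_nonneg_of_nonneg_of_le_pi hθ0 (by linarith)
    obtain ⟨hM, hN, hP⟩ := MNP_dom d (Real.cos θ) (Real.sin θ) hd hCnn hSnn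
      (by rw [← Real.sin_sq_add_cos_sq θ]; ring)
    refine main_real d (Real.cos φ) (Real.sin φ) (Real.cos θ) (Real.sin θ)
      s.re s.im t.re t.im hd ?_ ?_ ?_ <;> rw [hcos, hsin]
    · exact hM
    · exact hN
    · exact hP
end

section
/- For $\phi\in[-\pi,0)\cup(\pi/2,\pi]$, write $\vartheta\in(0,\pi/2]$ with $\cos\phi=\cos 3\vartheta$ and $\sin\phi=-\sin 3\vartheta$ (i.e. $\vartheta=-\phi/3$ or $\vartheta=(2\pi-\phi)/3$ respectively). Then for every $d>0$, the quantity $\cos\vartheta\, d^2 - \sin 3\vartheta\, d + \cos\vartheta - \cos 3\vartheta$ is strictly positive. -/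
theorem K11_positive (φ ϑ d : ℝ)
    (hφ : (-Real.pi ≤ φ ∧ φ < 0) ∨ (Real.pi / 2 < φ ∧ φ ≤ Real.pi))
    (hϑ₁ : 0 < ϑ) (hϑ₂ : ϑ ≤ Real.pi / 2)
    (hcos : Real.cos φ = Real.cos (3 * ϑ)) (hsin : Real.sin φ = -Real.sin (3 * ϑ))
    (hd : 0 < d) :
    0 < Real.cos ϑ * d ^ 2 - Real.sin (3 * ϑ) * d + Real.cos ϑ - Real.cos (3 * ϑ) := by
  have hpi := Real.pi_pos
  set s := Real.sin ϑ with hs_def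
  set c := Real.cos ϑ with hc_def
  have hs : 0 < s := Real.sin_pos_of_pos_of_lt_pi hϑ₁ (by linarith)
  have hpyth : s ^ 2 + c ^ 2 = 1 := Real.sin_sq_add_cos_sq ϑ
  rw [Real.sin_three_mul, Real.cos_three_mul, ← hs_def, ← hc_def]
  rcases le_or_gt ϑ (Real.pi / 3) with h13 | h13
  · -- small angle case: negative discriminant
    have hc : (1:ℝ)/2 ≤ c := by
      have : Real.cos (Real.pi/3) ≤ c := by
        apply Real.cos_le_cos_of_nonneg_of_le_pi (by positivity) (by linarith) h13
      rwa [Real.cos_pi_div_three] at this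
    have hs2 : s ^ 2 ≤ 3/4 := by nlinarith
    nlinarith [sq_nonneg (2*c*d - (3*s - 4*s^3)), mul_pos hs hs,
      mul_nonneg (mul_pos hs hs).le (by linarith : (0:ℝ) ≤ 3/4 - s^2)]
  · -- large angle case: sin 3ϑ ≤ 0
    have hc0 : 0 ≤ c := Real.cos_nonneg_of_mem_Icc ⟨by linarith, hϑ₂⟩
    have hcle : c ≤ 1/2 := by
      have : c ≤ Real.cos (Real.pi/3) :=
        Real.cos_le_cos_of_nonneg_of_le_pi (by positivity) (by linarith) h13.le
      rwa [Real.cos_pi_div_three] at this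
    have hs2 : 3/4 ≤ s ^ 2 := by nlinarith
    have hb : 0 ≤ 4*s^3 - 3*s := by nlinarith
    rcases lt_or_eq_of_le hϑ₂ with hlt | heq
    · have hc : 0 < c := Real.cos_pos_of_mem_Ioo ⟨by linarith, hlt⟩
      nlinarith [mul_pos hc (mul_pos hd hd), mul_nonneg hd.le hb,
        mul_pos hc (mul_pos hs hs)]
    · have hcz : c = 0 := by rw [hc_def, heq, Real.cos_pi_div_two]
      have hsz : s = 1 := by rw [hs_def, heq, Real.sin_pi_div_two]
      rw [hcz, hsz]; ring_nf; linarith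
end

section
/- Let $H = \begin{bmatrix} H_{11} & h \\ h^* & \eta \end{bmatrix}$ be an $n\times n$ Hermitian positive definite complex matrix with scalar bottom-right entry $\eta$, and suppose its spectral condition number satisfies $\kappa(H) \le \omega$. Then $h^* H_{11}^{-1} h \le \left(\frac{\omega-1}{\omega+1}\right)^2 \eta$. -/
/-!
Write `M = ‖H‖` and `m = ‖H⁻¹‖⁻¹`, so that `m ≤ H ≤ M` in the Loewner order. The factors of
`(M - H) (H - m) H⁻¹` are commuting nonnegative operators, so `H + M m H⁻¹ ≤ M + m`
(the operator Kantorovich inequality). Evaluated at the last basis vector `e`, this involves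
`e* H e = η` and, by the Schur complement formula, `e* H⁻¹ e = (η - h* H₁₁⁻¹ h)⁻¹`.
AM-GM then gives `η / (η - h* H₁₁⁻¹ h) ≤ (κ + 1)² / (4κ) ≤ (ω + 1)² / (4ω)` with `κ = M / m`,
which rearranges to the claim.
-/

open Matrix
open scoped ComplexOrder

/-- The spectral condition number `κ(H) = ‖H‖₂ ‖H⁻¹‖₂`. -/
noncomputable def condNum {𝕜 : Type*} [RCLike 𝕜] {n : Type*} [Fintype n] [DecidableEq n]
    (H : Matrix n n 𝕜) : ℝ :=
  ‖Matrix.toEuclideanCLM (𝕜 := 𝕜) H‖ * ‖Matrix.toEuclideanCLM (𝕜 := 𝕜) H⁻¹‖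

theorem one_le_condNum {𝕜 : Type*} [RCLike 𝕜] {n : Type*} [Fintype n] [DecidableEq n]
    [Nonempty n] {H : Matrix n n 𝕜} (hH : IsUnit H) : 1 ≤ condNum H := by
  calc (1 : ℝ) = ‖toEuclideanCLM (𝕜 := 𝕜) (H * H⁻¹)‖ := by
        rw [mul_nonsing_inv _ ((isUnit_iff_isUnit_det H).1 hH), map_one, norm_one]
    _ ≤ condNum H := by
        rw [map_mul]
        exact norm_mul_le _ _

namespace CStarAlgebra

variable {A : Type*} [CStarAlgebra A] [PartialOrder A] [StarOrderedRing A]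

theorem algebraMap_norm_inv_inv_le (a : Aˣ) (ha : 0 ≤ (a : A)) :
    algebraMap ℝ A ‖(↑a⁻¹ : A)‖⁻¹ ≤ a := by
  nontriviality A
  refine algebraMap_le_of_le_spectrum fun x hx => ?_
  have hx0 : 0 < x :=
    (spectrum_nonneg_of_nonneg ha hx).lt_of_ne' (spectrum.ne_zero_of_mem_of_unit hx)
  have hinv := spectrum.norm_le_norm_of_mem
    ((spectrum.inv_mem_iff (r := Units.mk0 x hx0.ne') (a := a)).1 hx)
  rw [Units.val_inv_eq_inv_val, Units.val_mk0, norm_inv, Real.norm_of_nonneg hx0.le] at hinv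
  exact inv_le_of_inv_le₀ hx0 hinv

theorem add_smul_inv_le_algebraMap_add (a : Aˣ) {m M : ℝ} (ha : 0 ≤ (a : A))
    (hm : algebraMap ℝ A m ≤ a) (hM : (a : A) ≤ algebraMap ℝ A M) :
    (a : A) + (M * m) • (↑a⁻¹ : A) ≤ algebraMap ℝ A (M + m) := by
  have hMa : Commute (algebraMap ℝ A M - a) a :=
    (Algebra.commute_algebraMap_left M _).sub_left (Commute.refl _)
  have ham : Commute (a - algebraMap ℝ A m) a :=
    (Commute.refl _).sub_left (Algebra.commute_algebraMap_left m _)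
  have hprod : 0 ≤ (algebraMap ℝ A M - a) * (a - algebraMap ℝ A m) * ↑a⁻¹ :=
    Commute.mul_nonneg
      (Commute.mul_nonneg (sub_nonneg.2 hM) (sub_nonneg.2 hm)
        (hMa.sub_right (Algebra.commute_algebraMap_right m _)))
      (CFC.inv_nonneg_of_nonneg a ha) (hMa.mul_left ham).units_inv_right
  have hexpand : (algebraMap ℝ A M - a) * (a - algebraMap ℝ A m) * ↑a⁻¹ =
      algebraMap ℝ A (M + m) - (a + (M * m) • (↑a⁻¹ : A)) := by
    simp only [Algebra.algebraMap_eq_smul_one, sub_mul, mul_sub, smul_mul_assoc, mul_smul_comm,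
      one_mul, mul_one, mul_assoc, Units.mul_inv]
    module
  exact sub_nonneg.1 (hexpand ▸ hprod)

end CStarAlgebra

section Kantorovich

open scoped Matrix.Norms.L2Operator MatrixOrder

theorem Matrix.PosDef.re_dotProduct_mulVec_add_le {n : Type*} [Fintype n] [DecidableEq n]
    {H : Matrix n n ℂ} (hH : H.PosDef) (x : n → ℂ) :
    (star x ⬝ᵥ H *ᵥ x).re + ‖H‖ * ‖H⁻¹‖⁻¹ * (star x ⬝ᵥ H⁻¹ *ᵥ x).re ≤
      (‖H‖ + ‖H⁻¹‖⁻¹) * (star x ⬝ᵥ x).re := by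
  lift H to (Matrix n n ℂ)ˣ using hH.isUnit
  have h0 : 0 ≤ (H : Matrix n n ℂ) := hH.posSemidef.nonneg
  have hle := CStarAlgebra.add_smul_inv_le_algebraMap_add H h0
    (CStarAlgebra.algebraMap_norm_inv_inv_le H h0) IsSelfAdjoint.le_algebraMap_norm_self
  have hx := (Complex.nonneg_iff.1 ((Matrix.le_iff.1 hle).dotProduct_mulVec_nonneg x)).1
  simpa [Algebra.algebraMap_eq_smul_one, sub_mulVec, add_mulVec, smul_mulVec, dotProduct_sub,
    dotProduct_add, add_mul] using hx

end Kantorovich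

namespace Matrix

variable {α : Type*} [Field α] [StarRing α] {m : Type*}

def borderedMatrix (A : Matrix m m α) (h : m → α) (c : α) : Matrix (m ⊕ Unit) (m ⊕ Unit) α :=
  fromBlocks A (of fun i (_ : Unit) => h i) (of fun (_ : Unit) j => star (h j)) (of fun _ _ => c)

variable {A : Matrix m m α} {h : m → α} {c : α}

theorem PosDef.of_borderedMatrix [PartialOrder α] (hB : (borderedMatrix A h c).PosDef) :
    A.PosDef :=
  hB.submatrix Sum.inl_injective

variable [Fintype m] [DecidableEq m]

theorem borderedMatrix_mulVec_sumElim_inv_mulVec (hA : IsUnit A) :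
    borderedMatrix A h c *ᵥ Sum.elim (A⁻¹ *ᵥ h) (fun _ => -1) =
      Pi.single (Sum.inr ()) (star h ⬝ᵥ A⁻¹ *ᵥ h - c) := by
  have hAh : A *ᵥ (A⁻¹ *ᵥ h) = h := by
    rw [mulVec_mulVec, mul_nonsing_inv _ ((isUnit_iff_isUnit_det A).1 hA), one_mulVec]
  ext (i | i) <;> rw [borderedMatrix, fromBlocks_mulVec]
  · rw [Sum.elim_inl, Pi.add_apply, Sum.elim_comp_inl, hAh]
    simp [mulVec, dotProduct]
  · rw [Sum.elim_inr, Pi.add_apply, Sum.elim_comp_inl, Sum.elim_comp_inr]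
    simp [mulVec, dotProduct, sub_eq_add_neg]

theorem borderedMatrix_inv_inr_inr (hA : IsUnit A) (hB : IsUnit (borderedMatrix A h c)) :
    (borderedMatrix A h c)⁻¹ (Sum.inr ()) (Sum.inr ()) = (c - star h ⬝ᵥ A⁻¹ *ᵥ h)⁻¹ := by
  have key := congrArg (fun v => ((borderedMatrix A h c)⁻¹ *ᵥ v) (Sum.inr ()))
    (borderedMatrix_mulVec_sumElim_inv_mulVec (h := h) (c := c) hA)
  simp only [mulVec_mulVec, nonsing_inv_mul _ ((isUnit_iff_isUnit_det _).1 hB), one_mulVec,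
    Sum.elim_inr, mulVec_single, Pi.smul_apply, col_apply, MulOpposite.smul_eq_mul_unop,
    MulOpposite.unop_op] at key
  exact eq_inv_of_mul_eq_one_left (by rw [← neg_sub, mul_neg, ← key, neg_neg])

theorem PosDef.borderedMatrix_schur_pos [PartialOrder α] (hB : (borderedMatrix A h c).PosDef) :
    0 < c - star h ⬝ᵥ A⁻¹ *ᵥ h := by
  have hw : Sum.elim (A⁻¹ *ᵥ h) (fun _ : Unit => (-1 : α)) ≠ 0 := fun hw =>
    one_ne_zero (neg_eq_zero.1 (congrFun hw (Sum.inr ())))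
  have hq := hB.dotProduct_mulVec_pos hw
  rwa [borderedMatrix_mulVec_sumElim_inv_mulVec hB.of_borderedMatrix.isUnit, dotProduct_single,
    Pi.star_apply, Sum.elim_inr, star_neg, star_one, neg_one_mul, neg_sub] at hq

end Matrix

theorem sub_le_sq_div_mul_of_add_mul_inv_le {M K ω η d : ℝ} (hK : 0 ≤ K) (hMK : 1 ≤ M * K)
    (hκ : M * K ≤ ω) (hd : 0 < d) (h : η + M * K⁻¹ * d⁻¹ ≤ M + K⁻¹) :
    η - d ≤ ((ω - 1) / (ω + 1)) ^ 2 * η := by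
  have hK0 : 0 < K := hK.lt_of_ne (by rintro rfl; simp at hMK; linarith)
  have hM0 : 0 < M := pos_of_mul_pos_left (by linarith) hK
  have hcleared : η * K * d + M ≤ (M * K + 1) * d := by
    have := mul_le_mul_of_nonneg_right h (mul_pos hK0 hd).le
    field_simp at this
    linarith
  have hκη : 4 * (M * K) * η ≤ (M * K + 1) ^ 2 * d := by
    have hsq : 4 * M * (η * K * d) ≤ ((M * K + 1) * d) ^ 2 := by
      rcases le_or_gt 0 (η * K * d + M) with hx | hx
      · nlinarith [sq_nonneg (η * K * d - M), pow_le_pow_left₀ hx hcleared 2]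
      · nlinarith [sq_nonneg ((M * K + 1) * d)]
    nlinarith
  -- `(ω + 1)² κ - ω (κ + 1)² = (ω - κ) (ω κ - 1)`
  have hωη : 4 * ω * η ≤ (ω + 1) ^ 2 * d := by
    have hmono : ω * (M * K + 1) ^ 2 ≤ (ω + 1) ^ 2 * (M * K) := by
      nlinarith [mul_nonneg (sub_nonneg.2 hκ) (by nlinarith : 0 ≤ ω * (M * K) - 1)]
    nlinarith
  have hω : 0 < ω + 1 := by linarith
  rw [div_pow, div_mul_eq_mul_div, le_div_iff₀ (by positivity)]
  nlinarith

/-- Wielandt–Kantorovich block estimate (scalar trailing block). -/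
theorem kantorovich_block {m : ℕ} (H₁₁ : Matrix (Fin m) (Fin m) ℂ) (h : Fin m → ℂ)
    (η ω : ℝ)
    (hH : (Matrix.fromBlocks H₁₁ (Matrix.of fun i (_ : Unit) => h i)
        (Matrix.of fun (_ : Unit) j => star (h j)) (Matrix.of fun _ _ => (η : ℂ))).PosDef)
    (hκ : condNum (Matrix.fromBlocks H₁₁ (Matrix.of fun i (_ : Unit) => h i)
        (Matrix.of fun (_ : Unit) j => star (h j)) (Matrix.of fun _ _ => (η : ℂ))) ≤ ω) :
    (star h ⬝ᵥ (H₁₁⁻¹ *ᵥ h)).re ≤ ((ω - 1) / (ω + 1)) ^ 2 * η := by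
  change (borderedMatrix H₁₁ h (η : ℂ)).PosDef at hH
  change condNum (borderedMatrix H₁₁ h (η : ℂ)) ≤ ω at hκ
  set H := borderedMatrix H₁₁ h (η : ℂ)
  set s := star h ⬝ᵥ H₁₁⁻¹ *ᵥ h
  obtain ⟨hd, hs⟩ := Complex.lt_def.1 hH.borderedMatrix_schur_pos
  have hschur : (η : ℂ) - s = ((η - s.re : ℝ) : ℂ) :=
    Complex.ext (by simp) (by simpa using hs.symm)
  have hinv : (H⁻¹ (Sum.inr ()) (Sum.inr ())).re = (η - s.re)⁻¹ := by
    rw [borderedMatrix_inv_inr_inr hH.of_borderedMatrix.isUnit hH.isUnit, hschur,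
      ← Complex.ofReal_inv, Complex.ofReal_re]
  have hcorner : (H (Sum.inr ()) (Sum.inr ())).re = η := by simp [H, borderedMatrix]
  have hK := hH.re_dotProduct_mulVec_add_le (Pi.single (Sum.inr ()) 1)
  simp only [Pi.star_single, star_one, mulVec_single, MulOpposite.op_one, one_smul,
    single_dotProduct, dotProduct_single, Pi.single_eq_same, col_apply, mul_one, one_mul,
    Complex.one_re] at hK
  rw [hcorner, hinv] at hK
  -- `condNum H` unfolds to `‖H‖ * ‖H⁻¹‖` for the L2 operator norm (`Matrix.cstar_norm_def`).
  simpa using sub_le_sq_div_mul_of_add_mul_inv_le (norm_nonneg _) (one_le_condNum hH.isUnit) hκ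
    (sub_pos.2 (by simpa using hd)) hK
end

section
/- A Higham matrix is nonsingular. That is, if $A = B + iC$ where $B,C\in\mathbb{R}^{n\times n}$ are symmetric positive definite, then $A$ is invertible. -/
open Matrix

lemma higham_aux {n : ℕ} (B : Matrix (Fin n) (Fin n) ℝ) (hB : B.PosDef)
    (v : Fin n → ℂ) (hv : v ≠ 0) :
    0 < (star v ⬝ᵥ (B.map Complex.ofReal) *ᵥ v).re := by
  set x : Fin n → ℝ := fun i => (v i).re with hx
  set y : Fin n → ℝ := fun i => (v i).im with hy
  have hre : (star v ⬝ᵥ (B.map Complex.ofReal) *ᵥ v).re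
      = x ⬝ᵥ B *ᵥ x + y ⬝ᵥ B *ᵥ y := by
    simp only [dotProduct, mulVec, map_apply, Pi.star_apply, Finset.mul_sum,
      Complex.re_sum, Complex.mul_re, Complex.mul_im, RCLike.star_def,
      Complex.conj_re, Complex.conj_im, Complex.ofReal_re, Complex.ofReal_im]
    rw [← Finset.sum_add_distrib]
    refine Finset.sum_congr rfl fun i _ => ?_
    rw [← Finset.sum_add_distrib]
    refine Finset.sum_congr rfl fun j _ => ?_
    ring
  have hR : ∀ z : Fin n → ℝ, z ≠ 0 → 0 < z ⬝ᵥ B *ᵥ z := fun z hz => by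
    simpa using hB.re_dotProduct_pos hz
  have hRn : ∀ z : Fin n → ℝ, 0 ≤ z ⬝ᵥ B *ᵥ z := fun z => by
    simpa using hB.posSemidef.re_dotProduct_nonneg z
  have hxy : x ≠ 0 ∨ y ≠ 0 := by
    by_contra h
    push_neg at h
    apply hv
    funext i
    have h1 : x i = 0 := by rw [h.1]; rfl
    have h2 : y i = 0 := by rw [h.2]; rfl
    exact Complex.ext h1 h2
  rw [hre]
  rcases hxy with h | h
  · exact add_pos_of_pos_of_nonneg (hR x h) (hRn y)
  · exact add_pos_of_nonneg_of_pos (hRn x) (hR y h)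

lemma higham_aux_im {n : ℕ} (C : Matrix (Fin n) (Fin n) ℝ) (hC : C.IsHermitian)
    (v : Fin n → ℂ) :
    (star v ⬝ᵥ (C.map Complex.ofReal) *ᵥ v).im = 0 := by
  set M := C.map Complex.ofReal with hM
  have hher : M.IsHermitian := hC.map Complex.ofReal (by intro a; simp)
  have key : star (star v ⬝ᵥ M *ᵥ v) = star v ⬝ᵥ M *ᵥ v := by
    conv_lhs => rw [star_dotProduct, star_star, star_mulVec, ← dotProduct_mulVec, hher.eq]
  rw [← Complex.conj_eq_iff_im]
  exact key

/-- A Higham matrix `A = B + iC`, with `B, C` real symmetric positive definite, is invertible. -/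
theorem higham_nonsingular {n : ℕ} (B C : Matrix (Fin n) (Fin n) ℝ)
    (hB : B.PosDef) (hC : C.PosDef) :
    IsUnit (B.map (Complex.ofReal) + Complex.I • C.map (Complex.ofReal)) := by
  rw [Matrix.isUnit_iff_isUnit_det, isUnit_iff_ne_zero]
  intro hdet
  obtain ⟨v, hvz, hv⟩ := (Matrix.exists_mulVec_eq_zero_iff).mpr hdet
  have h0 : star v ⬝ᵥ (B.map Complex.ofReal + Complex.I • C.map Complex.ofReal) *ᵥ v = 0 := by
    rw [hv, dotProduct_zero]
  rw [add_mulVec, smul_mulVec, dotProduct_add, dotProduct_smul] at h0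
  have hre := congrArg Complex.re h0
  simp only [smul_eq_mul, Complex.add_re, Complex.mul_re, Complex.I_re, Complex.I_im,
    Complex.zero_re, zero_mul, one_mul, zero_sub] at hre
  rw [higham_aux_im C hC.isHermitian v] at hre
  have := higham_aux B hB v hvz
  linarith
end

section
/- If $A = (a_{ij}) = P + iQ$ is a Higham matrix (with $P,Q$ real symmetric positive definite), then for every pair of distinct indices $i\ne j$, $|a_{ij}|^2 < |a_{ii}|\,|a_{jj}|$. In particular $\max_{i,j}|a_{ij}| = \max_i |a_{ii}|$, i.e., the largest entry in modulus lies on the diagonal. -/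
open Matrix


lemma posdef_diag_pos {m : Type*} [Fintype m] [DecidableEq m] (P : Matrix m m ℝ)
    (hP : P.PosDef) (i : m) : 0 < P i i := by
  have := hP.dotProduct_mulVec_pos (x := Pi.single i 1) (by
    intro h; simpa using congrFun h i)
  simpa [mulVec_single, single_dotProduct] using this

lemma posdef_offdiag_sq_lt {m : Type*} [Fintype m] [DecidableEq m] (P : Matrix m m ℝ)
    (hP : P.PosDef) (i j : m) (hij : i ≠ j) : P i j ^ 2 < P i i * P j j := by
  have hii := posdef_diag_pos P hP i
  set t : ℝ := -P i j / P i i with ht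
  have hx : (Pi.single i t + Pi.single j 1 : m → ℝ) ≠ 0 := by
    intro h
    have := congrFun h j
    simp [Pi.single_apply, hij.symm] at this
  have hpos := hP.dotProduct_mulVec_pos hx
  have hsym : P j i = P i j := by
    have := congrFun (congrFun hP.1 j) i
    simpa [conjTranspose_apply] using this.symm
  have hval : (star (Pi.single i t + Pi.single j 1 : m → ℝ)) ⬝ᵥ
      (P *ᵥ (Pi.single i t + Pi.single j 1)) =
      P i i * t ^ 2 + 2 * P i j * t + P j j := by
    simp [mulVec_add, mulVec_single, dotProduct_add, add_dotProduct, single_dotProduct, hsym]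
    ring
  rw [hval] at hpos
  have : P i i * t ^ 2 + 2 * P i j * t + P j j = P j j - P i j ^ 2 / P i i := by
    rw [ht]; field_simp; ring
  rw [this] at hpos
  have := (div_lt_iff₀ hii).mp (by linarith : P i j ^ 2 / P i i < P j j)
  linarith [this]

/-- Diagonal dominance in modulus for Higham matrices: `|a_{ij}|² < |a_{ii}||a_{jj}|` for `i ≠ j`,
and consequently the largest entry in modulus lies on the diagonal. -/
theorem higham_diagonal_max {n : ℕ} (P Q : Matrix (Fin (n + 1)) (Fin (n + 1)) ℝ)
    (hP : P.PosDef) (hQ : Q.PosDef)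
    (A : Matrix (Fin (n + 1)) (Fin (n + 1)) ℂ)
    (hA : A = P.map (Complex.ofReal) + Complex.I • Q.map (Complex.ofReal)) :
    (∀ i j, i ≠ j → ‖A i j‖ ^ 2 < ‖A i i‖ * ‖A j j‖) ∧
    (Finset.univ.sup' Finset.univ_nonempty
        (fun p : Fin (n + 1) × Fin (n + 1) => ‖A p.1 p.2‖) =
      Finset.univ.sup' Finset.univ_nonempty fun i => ‖A i i‖) := by
  have habs : ∀ i j, ‖A i j‖ ^ 2 = P i j ^ 2 + Q i j ^ 2 := by
    intro i j
    rw [Complex.sq_norm, hA]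
    simp [Complex.normSq_apply, Matrix.add_apply, Matrix.smul_apply, Matrix.map_apply]
    ring
  have key : ∀ i j, i ≠ j →
      ‖A i j‖ ^ 2 < ‖A i i‖ * ‖A j j‖ := by
    intro i j hij
    have h1 := posdef_offdiag_sq_lt P hP i j hij
    have h2 := posdef_offdiag_sq_lt Q hQ i j hij
    have hcs : P i i * P j j + Q i i * Q j j ≤ ‖A i i‖ * ‖A j j‖ := by
      have hsq : (P i i * P j j + Q i i * Q j j) ^ 2 ≤
          (‖A i i‖ * ‖A j j‖) ^ 2 := by
        rw [mul_pow, habs, habs]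
        nlinarith [sq_nonneg (P i i * Q j j - Q i i * P j j)]
      have h0 : 0 ≤ P i i * P j j + Q i i * Q j j := by
        have := posdef_diag_pos P hP i; have := posdef_diag_pos P hP j
        have := posdef_diag_pos Q hQ i; have := posdef_diag_pos Q hQ j
        positivity
      exact (pow_le_pow_iff_left₀ h0 (by positivity) two_ne_zero).mp hsq
    calc ‖A i j‖ ^ 2 = P i j ^ 2 + Q i j ^ 2 := habs i j
      _ < P i i * P j j + Q i i * Q j j := by linarith
      _ ≤ _ := hcs
  refine ⟨key, le_antisymm ?_ ?_⟩
  · apply Finset.sup'_le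
    intro p _
    rcases eq_or_ne p.1 p.2 with h | h
    · rw [h]
      exact Finset.le_sup' (fun i => ‖A i i‖) (Finset.mem_univ p.2)
    · set M := Finset.univ.sup' Finset.univ_nonempty fun i => ‖A i i‖ with hM
      have hle : ∀ i, ‖A i i‖ ≤ M := fun i =>
        Finset.le_sup' (fun i => ‖A i i‖) (Finset.mem_univ i)
      have hM0 : 0 ≤ M := le_trans (norm_nonneg _) (hle p.1)
      have hlt := key p.1 p.2 h
      have : ‖A p.1 p.2‖ ^ 2 ≤ M ^ 2 := by
        calc ‖A p.1 p.2‖ ^ 2 ≤ ‖A p.1 p.1‖ * ‖A p.2 p.2‖ :=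
              le_of_lt hlt
          _ ≤ M * M := mul_le_mul (hle p.1) (hle p.2) (norm_nonneg _) hM0
          _ = M ^ 2 := (sq M).symm
      exact (pow_le_pow_iff_left₀ (norm_nonneg _) hM0 two_ne_zero).mp this
  · apply Finset.sup'_le
    intro i _
    have := Finset.le_sup' (f := fun p : Fin (n+1) × Fin (n+1) => ‖A p.1 p.2‖)
      (Finset.mem_univ (i, i))
    exact this
end

section
/- Let $A = B + iC$ be accretive-dissipative (i.e., $B,C$ are Hermitian positive definite) and partitioned with a nonsingular principal block $A_{11}$; write the Schur complement $S = A_{22} - A_{21}A_{11}^{-1}A_{12} = R + iT$ with $R,T$ Hermitian. Then $R \ge B/B_{11}$ and $T \ge C/C_{11}$ in the Loewner order, where $B/B_{11}$ and $C/C_{11}$ denote the Schur complements of $B$ and $C$ with respect to their corresponding leading principal blocks. -/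
open Matrix
open scoped ComplexOrder

private lemma toBlocks11_posDef {p q : ℕ} {M : Matrix (Fin p ⊕ Fin q) (Fin p ⊕ Fin q) ℂ}
    (hM : M.PosDef) : M.toBlocks₁₁.PosDef := by
  refine PosDef.of_dotProduct_mulVec_pos (hM.1.submatrix Sum.inl) (fun v hv => ?_)
  have key : star v ⬝ᵥ M.toBlocks₁₁ *ᵥ v =
      star (Sum.elim v 0) ⬝ᵥ M *ᵥ (Sum.elim v 0) := by
    nth_rewrite 2 [← fromBlocks_toBlocks M]
    simp [Function.star_sumElim, fromBlocks_mulVec, sumElim_dotProduct_sumElim]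
  rw [key]
  refine hM.dotProduct_mulVec_pos (fun h => hv ?_)
  funext i
  exact congrFun h (Sum.inl i)

private lemma star_quadratic {n : Type*} [Fintype n] (M : Matrix n n ℂ) (u : n → ℂ) :
    star u ⬝ᵥ Mᴴ *ᵥ u = star (star u ⬝ᵥ M *ᵥ u) := by
  have h := star_dotProduct (M *ᵥ u) u
  rw [dotProduct_mulVec, ← star_mulVec, h]

private lemma herm_quadratic_eq {n : Type*} [Fintype n] (c : ℂ) (M : Matrix n n ℂ) (u : n → ℂ) :
    star u ⬝ᵥ (c • (M + Mᴴ)) *ᵥ u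
      = c * (star u ⬝ᵥ M *ᵥ u + star (star u ⬝ᵥ M *ᵥ u)) := by
  rw [smul_mulVec, dotProduct_smul, add_mulVec, dotProduct_add, star_quadratic]
  rfl

private lemma skew_quadratic_eq {n : Type*} [Fintype n] (c : ℂ) (M : Matrix n n ℂ) (u : n → ℂ) :
    star u ⬝ᵥ (c • (M - Mᴴ)) *ᵥ u
      = c * (star u ⬝ᵥ M *ᵥ u - star (star u ⬝ᵥ M *ᵥ u)) := by
  rw [smul_mulVec, dotProduct_smul, sub_mulVec, dotProduct_sub, star_quadratic]
  rfl

/-- The key quadratic-form identity: with `u = (-(A₁₁⁻¹A₁₂)x) ⊕ᵥ x`, one has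
`u* A u = x* S x` where `S` is the Schur complement. -/
private lemma quad_eq_schur {p q : ℕ}
    (A : Matrix (Fin p ⊕ Fin q) (Fin p ⊕ Fin q) ℂ) (h11 : IsUnit A.toBlocks₁₁)
    (S : Matrix (Fin q) (Fin q) ℂ)
    (hS : S = A.toBlocks₂₂ - A.toBlocks₂₁ * A.toBlocks₁₁⁻¹ * A.toBlocks₁₂)
    (x : Fin q → ℂ) :
    star (Sum.elim (-((A.toBlocks₁₁⁻¹ * A.toBlocks₁₂) *ᵥ x)) x) ⬝ᵥ
      A *ᵥ (Sum.elim (-((A.toBlocks₁₁⁻¹ * A.toBlocks₁₂) *ᵥ x)) x)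
      = star x ⬝ᵥ S *ᵥ x := by
  set y := -((A.toBlocks₁₁⁻¹ * A.toBlocks₁₂) *ᵥ x) with hy
  have hinv : A.toBlocks₁₁ * A.toBlocks₁₁⁻¹ = 1 :=
    mul_nonsing_inv _ ((isUnit_iff_isUnit_det _).1 h11)
  have h1 : A.toBlocks₁₁ *ᵥ y + A.toBlocks₁₂ *ᵥ x = 0 := by
    rw [hy, mulVec_neg, mulVec_mulVec, ← Matrix.mul_assoc, hinv, Matrix.one_mul,
      neg_add_cancel]
  have h2 : A.toBlocks₂₁ *ᵥ y + A.toBlocks₂₂ *ᵥ x = S *ᵥ x := by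
    rw [hy, mulVec_neg, mulVec_mulVec, ← Matrix.mul_assoc, hS, sub_mulVec]
    ring_nf
  nth_rewrite 1 [← fromBlocks_toBlocks A]
  rw [fromBlocks_mulVec]
  simp only [Sum.elim_comp_inl, Sum.elim_comp_inr]
  rw [h1, h2, Function.star_sumElim, sumElim_dotProduct_sumElim,
    dotProduct_zero, zero_add]

/-- Main auxiliary lemma: if `M` is positive definite and the quadratic form of `N`
matches that of `M` along the Schur coupling (via the quadratic form of `A`),
then `N` dominates the Schur complement of `M`. -/
private lemma main_aux {p q : ℕ}
    (A M : Matrix (Fin p ⊕ Fin q) (Fin p ⊕ Fin q) ℂ)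
    (hM : M.PosDef) (h11 : IsUnit A.toBlocks₁₁)
    (S N : Matrix (Fin q) (Fin q) ℂ)
    (hS : S = A.toBlocks₂₂ - A.toBlocks₂₁ * A.toBlocks₁₁⁻¹ * A.toBlocks₁₂)
    (hN : N.IsHermitian)
    (hmatch : ∀ (u : Fin p ⊕ Fin q → ℂ) (x : Fin q → ℂ),
      star u ⬝ᵥ A *ᵥ u = star x ⬝ᵥ S *ᵥ x →
      star u ⬝ᵥ M *ᵥ u = star x ⬝ᵥ N *ᵥ x) :
    (N - (M.toBlocks₂₂ - M.toBlocks₂₁ * M.toBlocks₁₁⁻¹ * M.toBlocks₁₂)).PosSemidef := by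
  have hM11 : M.toBlocks₁₁.PosDef := toBlocks11_posDef hM
  have h21 : M.toBlocks₂₁ = M.toBlocks₁₂ᴴ := by
    ext i j
    simpa [toBlocks₂₁, toBlocks₁₂, conjTranspose_apply] using
      (congrFun (congrFun hM.1.eq (Sum.inr i)) (Sum.inl j)).symm
  have hschurH : (M.toBlocks₂₂ - M.toBlocks₂₁ * M.toBlocks₁₁⁻¹ * M.toBlocks₁₂).IsHermitian := by
    rw [h21]
    exact IsHermitian.sub (hM.1.submatrix Sum.inr)
      (isHermitian_conjTranspose_mul_mul _ hM11.1.inv)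
  refine PosSemidef.of_dotProduct_mulVec_nonneg (hN.sub hschurH) (fun x => ?_)
  set y := -((A.toBlocks₁₁⁻¹ * A.toBlocks₁₂) *ᵥ x) with hy
  set u := Sum.elim y x with hu
  have hqA : star u ⬝ᵥ A *ᵥ u = star x ⬝ᵥ S *ᵥ x := quad_eq_schur A h11 S hS x
  have hqM : star u ⬝ᵥ M *ᵥ u = star x ⬝ᵥ N *ᵥ x := hmatch u x hqA
  haveI : Invertible M.toBlocks₁₁ := hM11.isUnit.invertible
  have hdecomp := schur_complement_eq₁₁ (A := M.toBlocks₁₁) M.toBlocks₁₂ M.toBlocks₂₂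
    y x hM11.1
  have hMblocks : M = fromBlocks M.toBlocks₁₁ M.toBlocks₁₂ M.toBlocks₁₂ᴴ M.toBlocks₂₂ := by
    rw [← h21, fromBlocks_toBlocks]
  have hqM' : star u ⬝ᵥ M *ᵥ u =
      (star (y + (M.toBlocks₁₁⁻¹ * M.toBlocks₁₂) *ᵥ x)) ᵥ* M.toBlocks₁₁ ⬝ᵥ
        (y + (M.toBlocks₁₁⁻¹ * M.toBlocks₁₂) *ᵥ x) +
      star x ⬝ᵥ (M.toBlocks₂₂ - M.toBlocks₁₂ᴴ * M.toBlocks₁₁⁻¹ * M.toBlocks₁₂) *ᵥ x := by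
    conv_lhs => rw [hu, hMblocks]
    rw [dotProduct_mulVec, hdecomp, ← dotProduct_mulVec (star x)]
  have hpos : 0 ≤ (star (y + (M.toBlocks₁₁⁻¹ * M.toBlocks₁₂) *ᵥ x)) ᵥ* M.toBlocks₁₁ ⬝ᵥ
      (y + (M.toBlocks₁₁⁻¹ * M.toBlocks₁₂) *ᵥ x) := by
    rw [← dotProduct_mulVec]
    exact hM11.posSemidef.dotProduct_mulVec_nonneg _
  have : star x ⬝ᵥ (N - (M.toBlocks₂₂ - M.toBlocks₂₁ * M.toBlocks₁₁⁻¹ * M.toBlocks₁₂)) *ᵥ x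
      = star u ⬝ᵥ M *ᵥ u -
        star x ⬝ᵥ (M.toBlocks₂₂ - M.toBlocks₁₂ᴴ * M.toBlocks₁₁⁻¹ * M.toBlocks₁₂) *ᵥ x := by
    rw [sub_mulVec, dotProduct_sub, hqM, h21]
  rw [this, hqM', add_sub_cancel_right]
  exact hpos

/-- Loewner lower bounds for the real and imaginary (Hermitian) parts of the Schur complement of
an accretive-dissipative matrix: `R ≥ B/B₁₁` and `T ≥ C/C₁₁`. -/
theorem schur_loewner_lower {p q : ℕ}
    (A : Matrix (Fin p ⊕ Fin q) (Fin p ⊕ Fin q) ℂ)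
    (B C : Matrix (Fin p ⊕ Fin q) (Fin p ⊕ Fin q) ℂ)
    (hBdef : B = (1 / 2 : ℂ) • (A + Aᴴ))
    (hCdef : C = (1 / (2 * Complex.I) : ℂ) • (A - Aᴴ))
    (hB : B.PosDef) (hC : C.PosDef)
    (h11 : IsUnit A.toBlocks₁₁)
    (S R T : Matrix (Fin q) (Fin q) ℂ)
    (hS : S = A.toBlocks₂₂ - A.toBlocks₂₁ * A.toBlocks₁₁⁻¹ * A.toBlocks₁₂)
    (hR : R = (1 / 2 : ℂ) • (S + Sᴴ))
    (hT : T = (1 / (2 * Complex.I) : ℂ) • (S - Sᴴ)) :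
    (R - (B.toBlocks₂₂ - B.toBlocks₂₁ * B.toBlocks₁₁⁻¹ * B.toBlocks₁₂)).PosSemidef ∧
    (T - (C.toBlocks₂₂ - C.toBlocks₂₁ * C.toBlocks₁₁⁻¹ * C.toBlocks₁₂)).PosSemidef := by
  have hRH : R.IsHermitian := by
    rw [IsHermitian, hR, conjTranspose_smul, conjTranspose_add, conjTranspose_conjTranspose]
    rw [show star (1 / 2 : ℂ) = (1 / 2 : ℂ) by simp, add_comm]
  have hTH : T.IsHermitian := by
    rw [IsHermitian, hT, conjTranspose_smul, conjTranspose_sub, conjTranspose_conjTranspose]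
    rw [show star (1 / (2 * Complex.I) : ℂ) = -(1 / (2 * Complex.I) : ℂ) by
      simp [div_eq_mul_inv, mul_inv, Complex.inv_I]]
    rw [neg_smul, ← smul_neg, neg_sub]
  constructor
  · refine main_aux A B hB h11 S R hS hRH (fun u x h => ?_)
    rw [hBdef, hR, herm_quadratic_eq, herm_quadratic_eq, h]
  · refine main_aux A C hC h11 S T hS hTH (fun u x h => ?_)
    rw [hCdef, hT, skew_quadratic_eq, skew_quadratic_eq, h]
end

section
/- Let $\omega\ge 1$, $r = \frac{\omega-1}{\omega+1}$, and $A_\omega^+ = \begin{bmatrix} 1+i & r(1-i) \\ r(1-i) & 1+i \end{bmatrix}$. Then the real part of $A_\omega^+$ is $\begin{bmatrix}1&r\\r&1\end{bmatrix}$ and the imaginary part is $\begin{bmatrix}1&-r\\-r&1\end{bmatrix}$, both are positive definite with condition number exactly $\omega$, and the scalar Schur complement of the $(1,1)$ entry satisfies $(1+i) - \frac{r^2(1-i)^2}{1+i} = \frac{2(1+\omega^2)}{(1+\omega)^2}(1+i)$. -/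
open Matrix Complex

section Helpers

lemma norm_symm_clm (s : ℝ) :
    ‖toEuclideanCLM (𝕜 := ℝ) (!![1, s; s, 1] : Matrix (Fin 2) (Fin 2) ℝ)‖ = 1 + |s| := by
  have habs := abs_nonneg s
  apply le_antisymm
  · apply ContinuousLinearMap.opNorm_le_bound _ (by positivity)
    intro x
    have hx : ∀ i, (toEuclideanCLM (𝕜 := ℝ) (!![1, s; s, 1]) x) i
        = !![1, s; s, 1].mulVec x i := fun _ => rfl
    rw [EuclideanSpace.norm_eq, EuclideanSpace.norm_eq]
    rw [show (1 + |s|) * Real.sqrt (∑ i, ‖x i‖ ^ 2)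
        = Real.sqrt ((1 + |s|) ^ 2 * ∑ i, ‖x i‖ ^ 2) by
      rw [Real.sqrt_mul (by positivity), Real.sqrt_sq (by positivity)]]
    apply Real.sqrt_le_sqrt
    have e00 : (!![1, s; s, 1] : Matrix (Fin 2) (Fin 2) ℝ) 0 0 = 1 := rfl
    have e01 : (!![1, s; s, 1] : Matrix (Fin 2) (Fin 2) ℝ) 0 1 = s := rfl
    have e10 : (!![1, s; s, 1] : Matrix (Fin 2) (Fin 2) ℝ) 1 0 = s := rfl
    have e11 : (!![1, s; s, 1] : Matrix (Fin 2) (Fin 2) ℝ) 1 1 = 1 := rfl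
    simp only [hx, Matrix.mulVec, dotProduct, Fin.sum_univ_two,
      e00, e01, e10, e11, Real.norm_eq_abs, _root_.sq_abs]
    have h1 : s * (x 0 * x 1) ≤ |s| * (x 0 ^2 + x 1 ^2) / 2 := by
      have := abs_mul s (x 0 * x 1)
      have h2 : s * (x 0 * x 1) ≤ |s * (x 0 * x 1)| := le_abs_self _
      have h3 : |x 0 * x 1| ≤ (x 0 ^2 + x 1 ^2)/2 := by
        rw [abs_mul]
        nlinarith [sq_nonneg (|x 0| - |x 1|), _root_.sq_abs (x 0), _root_.sq_abs (x 1)]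
      nlinarith [abs_nonneg s]
    nlinarith [sq_nonneg (x 0 - x 1), sq_nonneg (x 0 + x 1), _root_.sq_abs s]
  · set t : ℝ := if 0 ≤ s then 1 else -1 with ht
    set x : EuclideanSpace ℝ (Fin 2) := (WithLp.equiv _ _).symm ![1, t] with hxdef
    have hst : s * t = |s| := by
      rcases le_or_gt 0 s with h | h
      · simp [ht, h, _root_.abs_of_nonneg h]
      · simp [ht, not_le.2 h, _root_.abs_of_neg h]
    have hnx : ‖x‖ = Real.sqrt 2 := by
      rw [EuclideanSpace.norm_eq]
      have ht2 : t ^ 2 = 1 := by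
        rcases le_or_gt 0 s with h | h
        · simp [ht, h]
        · simp [ht, not_le.2 h]
      simp only [Fin.sum_univ_two, Real.norm_eq_abs, _root_.sq_abs]
      norm_num [hxdef, ht2]
    have hTx : ‖toEuclideanCLM (𝕜 := ℝ) (!![1, s; s, 1]) x‖ = (1 + |s|) * Real.sqrt 2 := by
      rw [EuclideanSpace.norm_eq]
      have hx : ∀ i, (toEuclideanCLM (𝕜 := ℝ) (!![1, s; s, 1]) x) i
          = !![1, s; s, 1].mulVec x i := fun _ => rfl
      have ht2 : t ^ 2 = 1 := by
        rcases le_or_gt 0 s with h | h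
        · simp [ht, h]
        · simp [ht, not_le.2 h]
      simp only [hx, Fin.sum_univ_two, Matrix.mulVec, dotProduct,
        Real.norm_eq_abs, _root_.sq_abs]
      have e0 : (x 0 : ℝ) = 1 := rfl
      have e1 : (x 1 : ℝ) = t := rfl
      rw [show ((!![1, s; s, 1] : Matrix (Fin 2) (Fin 2) ℝ) 0 0 * x 0 + !![1, s; s, 1] 0 1 * x 1) = 1 + s * t by
        simp [e0, e1]]
      rw [show ((!![1, s; s, 1] : Matrix (Fin 2) (Fin 2) ℝ) 1 0 * x 0 + !![1, s; s, 1] 1 1 * x 1) = (s + t) by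
        simp [e0, e1]]
      have : (1 + s*t)^2 + (s+t)^2 = (1+|s|)^2 * 2 := by
        have hs2 : s ^ 2 = |s| ^2 := (_root_.sq_abs s).symm
        nlinarith [hst, ht2, _root_.sq_abs s]
      rw [this, Real.sqrt_mul (by positivity), Real.sqrt_sq (by positivity)]
    have := (toEuclideanCLM (𝕜 := ℝ) (!![1, s; s, 1] : Matrix (Fin 2) (Fin 2) ℝ)).le_opNorm x
    rw [hTx, hnx] at this
    have h2 : (0:ℝ) < Real.sqrt 2 := by positivity
    calc 1 + |s| = (1 + |s|) * Real.sqrt 2 / Real.sqrt 2 := by field_simp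
    _ ≤ _ := by
        rw [div_le_iff₀ h2]
        exact this

lemma inv_symm_mat (s : ℝ) (hs : s ^ 2 ≠ 1) :
    (!![1, s; s, 1] : Matrix (Fin 2) (Fin 2) ℝ)⁻¹ = (1 - s ^ 2)⁻¹ • !![1, -s; -s, 1] := by
  apply Matrix.inv_eq_right_inv
  have h : (1 : ℝ) - s ^ 2 ≠ 0 := by
    intro h; apply hs; linarith
  ext i j
  fin_cases i <;> fin_cases j <;>
    simp [Matrix.mul_apply, Fin.sum_univ_two, Matrix.smul_apply, Matrix.one_apply] <;>
    field_simp <;> ring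

lemma posdef_symm_mat (s : ℝ) (hs : |s| < 1) :
    (!![1, s; s, 1] : Matrix (Fin 2) (Fin 2) ℝ).PosDef := by
  rw [Matrix.posDef_iff_dotProduct_mulVec]
  constructor
  · unfold Matrix.IsHermitian
    ext i j
    fin_cases i <;> fin_cases j <;> simp
  · intro x hx
    have hx2 : x 0 ^ 2 + x 1 ^ 2 > 0 := by
      rcases Function.ne_iff.1 hx with ⟨i, hi⟩
      fin_cases i
      · have hi' : x 0 ≠ 0 := hi
        have : x 0 ^ 2 > 0 := by positivity
        nlinarith [sq_nonneg (x 1)]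
      · have hi' : x 1 ≠ 0 := hi
        have : x 1 ^ 2 > 0 := by positivity
        nlinarith [sq_nonneg (x 0)]
    simp only [dotProduct, Matrix.mulVec, Fin.sum_univ_two, star, id]
    have e00 : (!![1, s; s, 1] : Matrix (Fin 2) (Fin 2) ℝ) 0 0 = 1 := rfl
    have e01 : (!![1, s; s, 1] : Matrix (Fin 2) (Fin 2) ℝ) 0 1 = s := rfl
    have e10 : (!![1, s; s, 1] : Matrix (Fin 2) (Fin 2) ℝ) 1 0 = s := rfl
    have e11 : (!![1, s; s, 1] : Matrix (Fin 2) (Fin 2) ℝ) 1 1 = 1 := rfl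
    rw [e00, e01, e10, e11]
    have h1 : s * (x 0 * x 1) ≥ -(|s| * (x 0 ^2 + x 1 ^2) / 2) := by
      have h2 : -(s * (x 0 * x 1)) ≤ |s * (x 0 * x 1)| := neg_le_abs _
      have h3 : |x 0 * x 1| ≤ (x 0 ^2 + x 1 ^2)/2 := by
        rw [abs_mul]
        nlinarith [sq_nonneg (|x 0| - |x 1|), _root_.sq_abs (x 0), _root_.sq_abs (x 1)]
      rw [abs_mul] at h2
      nlinarith [abs_nonneg s]
    nlinarith [abs_nonneg s]

end Helpers

set_option synthInstance.maxHeartbeats 1000000 in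
lemma condNum_symm_mat (s : ℝ) (hs : |s| < 1) :
    condNum (!![1, s; s, 1] : Matrix (Fin 2) (Fin 2) ℝ) = (1 + |s|) / (1 - |s|) := by
  have hs2 : s ^ 2 ≠ 1 := by
    intro h
    have := _root_.sq_abs s
    nlinarith [abs_nonneg s]
  have h1 : (0:ℝ) < 1 - s ^ 2 := by nlinarith [_root_.sq_abs s, abs_nonneg s]
  unfold condNum
  rw [inv_symm_mat s hs2, _root_.map_smul]
  have hns : ∀ (c : ℝ) (T : EuclideanSpace ℝ (Fin 2) →L[ℝ] EuclideanSpace ℝ (Fin 2)),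
      ‖c • T‖ = |c| * ‖T‖ := fun c T => by
    have := _root_.norm_smul (α := ℝ)
      (β := EuclideanSpace ℝ (Fin 2) →L[ℝ] EuclideanSpace ℝ (Fin 2)) c T
    simpa using this
  rw [hns, norm_symm_clm s]
  have : (!![1, -s; -s, 1] : Matrix (Fin 2) (Fin 2) ℝ) = !![1, (-s); (-s), 1] := rfl
  rw [this, norm_symm_clm (-s), abs_neg]
  rw [abs_inv, abs_of_pos h1]
  have h2 : 1 - s ^ 2 = (1 - |s|) * (1 + |s|) := by
    have := _root_.sq_abs s
    nlinarith
  rw [h2]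
  have h3 : (0:ℝ) < 1 - |s| := by linarith
  have h4 : (0:ℝ) < 1 + |s| := by nlinarith [abs_nonneg s]
  field_simp

/-- The extremal family `A_ω⁺` attaining the upper scalar Schur-complement bound. -/
theorem extremal_upper_family (ω : ℝ) (hω : 1 ≤ ω) (r : ℝ) (hr : r = (ω - 1) / (ω + 1)) :
    (!![1 + I, r * (1 - I); r * (1 - I), 1 + I] : Matrix (Fin 2) (Fin 2) ℂ) =
      (!![1, r; r, 1] : Matrix (Fin 2) (Fin 2) ℝ).map Complex.ofReal +
        I • (!![1, -r; -r, 1] : Matrix (Fin 2) (Fin 2) ℝ).map Complex.ofReal ∧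
    (!![1, r; r, 1] : Matrix (Fin 2) (Fin 2) ℝ).PosDef ∧
    (!![1, -r; -r, 1] : Matrix (Fin 2) (Fin 2) ℝ).PosDef ∧
    condNum (!![1, r; r, 1] : Matrix (Fin 2) (Fin 2) ℝ) = ω ∧
    condNum (!![1, -r; -r, 1] : Matrix (Fin 2) (Fin 2) ℝ) = ω ∧
    (1 + I) - ((r : ℂ) ^ 2 * (1 - I) ^ 2) / (1 + I) =
      ((2 * (1 + ω ^ 2) / (1 + ω) ^ 2 : ℝ) : ℂ) * (1 + I) := by
  have hω1 : (0:ℝ) < ω + 1 := by linarith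
  have hr0 : 0 ≤ r := by
    rw [hr]; apply div_nonneg <;> linarith
  have hr1 : r < 1 := by
    rw [hr, div_lt_one hω1]; linarith
  have habs : |r| < 1 := by rwa [_root_.abs_of_nonneg hr0]
  have habs' : |(-r)| < 1 := by rwa [abs_neg]
  have hmneg : (!![1, -r; -r, 1] : Matrix (Fin 2) (Fin 2) ℝ) = !![1, (-r); (-r), 1] := rfl
  refine ⟨?_, ?_, ?_, ?_, ?_, ?_⟩
  · ext i j
    fin_cases i <;> fin_cases j <;>
      simp [Matrix.map_apply, Matrix.add_apply, Matrix.smul_apply] <;> ring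
  · exact posdef_symm_mat r habs
  · rw [hmneg]; exact posdef_symm_mat (-r) habs'
  · rw [condNum_symm_mat r habs, _root_.abs_of_nonneg hr0]
    have h5 : 1 - r ≠ 0 := by intro h; nlinarith
    rw [div_eq_iff h5, hr]
    field_simp
    ring
  · rw [hmneg, condNum_symm_mat (-r) habs', abs_neg, _root_.abs_of_nonneg hr0]
    have h5 : 1 - r ≠ 0 := by intro h; nlinarith
    rw [div_eq_iff h5, hr]
    field_simp
    ring
  · have h1I : (1 : ℂ) + I ≠ 0 := by
      intro h
      have := congrArg Complex.im h
      simp at this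
    have hω1C : ((ω : ℂ) + 1) ≠ 0 := by
      intro h
      have := congrArg Complex.re h
      simp at this
      linarith
    subst hr
    push_cast
    field_simp
    ring_nf
    simp only [Complex.I_sq]
    have hd : (1 + (ω:ℂ) * 2 + (ω:ℂ) ^ 2) ≠ 0 := by
      have he : (1 + (ω:ℂ) * 2 + (ω:ℂ) ^ 2) = ((ω:ℂ) + 1) ^ 2 := by ring
      rw [he]; exact pow_ne_zero _ hω1C
    field_simp
    ring
end

section
/- Let $\omega\ge 1$, $r = \frac{\omega-1}{\omega+1}$, and $A_\omega^- = \begin{bmatrix} 1+i & r(1+i) \\ r(1+i) & 1+i \end{bmatrix}$. Then both the real and imaginary parts of $A_\omega^-$ equal $\begin{bmatrix}1&r\\r&1\end{bmatrix}$, which has condition number $\omega$, and the scalar Schur complement satisfies $(1+i) - \frac{r^2(1+i)^2}{1+i} = \frac{4\omega}{(1+\omega)^2}(1+i)$. -/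
open Matrix Complex

lemma norm_sym (c t : ℝ) (hc : 0 ≤ c) :
    ‖Matrix.toEuclideanCLM (𝕜 := ℝ) (!![c, t; t, c] : Matrix (Fin 2) (Fin 2) ℝ)‖ = c + |t| := by
  set T := Matrix.toEuclideanCLM (𝕜 := ℝ) (!![c, t; t, c] : Matrix (Fin 2) (Fin 2) ℝ) with hT
  have hap : ∀ x : EuclideanSpace ℝ (Fin 2), ∀ i, T x i = (!![c, t; t, c]).mulVec (fun j => x j) i := by
    intro x i; rfl
  have key : ∀ x : EuclideanSpace ℝ (Fin 2),
      ‖T x‖ = Real.sqrt ((c * x 0 + t * x 1)^2 + (t * x 0 + c * x 1)^2) := by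
    intro x
    rw [EuclideanSpace.norm_eq]
    congr 1
    rw [Fin.sum_univ_two, hap x 0, hap x 1]
    simp [Matrix.mulVec, dotProduct, Fin.sum_univ_two, _root_.sq_abs, Matrix.vecHead, Matrix.vecTail]
  have hnx : ∀ x : EuclideanSpace ℝ (Fin 2), ‖x‖ = Real.sqrt ((x 0)^2 + (x 1)^2) := by
    intro x
    rw [EuclideanSpace.norm_eq, Fin.sum_univ_two]
    simp [_root_.sq_abs]
  refine le_antisymm ?_ ?_
  · refine ContinuousLinearMap.opNorm_le_bound T (by positivity) fun x => ?_
    rw [key, hnx, show (c + |t|) * Real.sqrt ((x 0)^2 + (x 1)^2)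
        = Real.sqrt ((c + |t|)^2 * ((x 0)^2 + (x 1)^2)) by
      rw [Real.sqrt_mul (by positivity), Real.sqrt_sq (by positivity)]]
    apply Real.sqrt_le_sqrt
    nlinarith [mul_nonneg (mul_nonneg hc (sub_nonneg.2 (le_abs_self t))) (sq_nonneg (x 0 + x 1)),
      mul_nonneg (mul_nonneg hc (by linarith [neg_abs_le t] : (0:ℝ) ≤ |t| + t)) (sq_nonneg (x 0 - x 1)),
      _root_.sq_abs t]
  · set s : ℝ := if 0 ≤ t then 1 else -1 with hs
    set x : EuclideanSpace ℝ (Fin 2) := (WithLp.equiv 2 (Fin 2 → ℝ)).symm ![1, s] with hx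
    have hx0 : x 0 = 1 := rfl
    have hx1 : x 1 = s := rfl
    have hts : t * s = |t| := by
      rcases le_or_gt 0 t with h | h
      · simp [hs, h, _root_.abs_of_nonneg h]
      · simp [hs, not_le.2 h, _root_.abs_of_neg h]
    have hs2 : s^2 = 1 := by
      rcases le_or_gt 0 t with h | h
      · simp [hs, h]
      · simp [hs, not_le.2 h]
    have h1 : ‖T x‖ = (c + |t|) * Real.sqrt 2 := by
      rw [key, hx0, hx1]
      have : (c * 1 + t * s)^2 + (t * 1 + c * s)^2 = (c + |t|)^2 * 2 := by
        rcases le_or_gt 0 t with h | h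
        · simp only [hs, if_pos h, _root_.abs_of_nonneg h]; ring
        · simp only [hs, if_neg (not_le.2 h), _root_.abs_of_neg h]; ring
      rw [this, Real.sqrt_mul (by positivity), Real.sqrt_sq (by positivity)]
    have h2 : ‖x‖ = Real.sqrt 2 := by
      rw [hnx, hx0, hx1, hs2]; norm_num
    have := T.le_opNorm x
    rw [h1, h2] at this
    have h2pos : (0:ℝ) < Real.sqrt 2 := by positivity
    exact le_of_mul_le_mul_right this h2pos


set_option synthInstance.maxHeartbeats 1000000 in
set_option maxHeartbeats 1000000 in
/-- The extremal family `A_ω⁻` attaining the lower scalar Schur-complement bound. -/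
theorem extremal_lower_family (ω : ℝ) (hω : 1 ≤ ω) (r : ℝ) (hr : r = (ω - 1) / (ω + 1)) :
    (!![1 + I, r * (1 + I); r * (1 + I), 1 + I] : Matrix (Fin 2) (Fin 2) ℂ) =
      (!![1, r; r, 1] : Matrix (Fin 2) (Fin 2) ℝ).map Complex.ofReal +
        I • (!![1, r; r, 1] : Matrix (Fin 2) (Fin 2) ℝ).map Complex.ofReal ∧
    (!![1, r; r, 1] : Matrix (Fin 2) (Fin 2) ℝ).PosDef ∧
    condNum (!![1, r; r, 1] : Matrix (Fin 2) (Fin 2) ℝ) = ω ∧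
    (1 + I) - ((r : ℂ) ^ 2 * (1 + I) ^ 2) / (1 + I) =
      ((4 * ω / (1 + ω) ^ 2 : ℝ) : ℂ) * (1 + I) := by
  have hω1 : (0:ℝ) < ω + 1 := by linarith
  have hr0 : 0 ≤ r := by rw [hr]; exact div_nonneg (by linarith) (by linarith)
  have hr1 : r < 1 := by
    rw [hr, div_lt_one hω1]; linarith
  refine ⟨?_, ?_, ?_, ?_⟩
  · ext i j
    fin_cases i <;> fin_cases j <;> simp <;> ring
  · refine Matrix.posDef_iff_dotProduct_mulVec.2 ⟨?_, ?_⟩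
    · ext i j
      fin_cases i <;> fin_cases j <;> simp [Matrix.conjTranspose_apply]
    · intro x hx
      have hx' : x 0 ≠ 0 ∨ x 1 ≠ 0 := by
        by_contra h
        push_neg at h
        apply hx
        ext i
        fin_cases i <;> simp [h.1, h.2]
      have : (star x) ⬝ᵥ ((!![1, r; r, 1] : Matrix (Fin 2) (Fin 2) ℝ) *ᵥ x)
          = x 0 ^ 2 + x 1 ^ 2 + 2 * r * (x 0 * x 1) := by
        simp [dotProduct, Matrix.mulVec, Fin.sum_univ_two, Matrix.vecHead, Matrix.vecTail]
        ring
      rw [this]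
      rcases hx' with h | h <;>
        nlinarith [sq_nonneg (x 0 + x 1), sq_nonneg (x 0), sq_nonneg (x 1),
          mul_nonneg hr0 (sq_nonneg (x 0 + x 1)), mul_self_pos.mpr h]
  · have hdet : (!![1, r; r, 1] : Matrix (Fin 2) (Fin 2) ℝ).det = 1 - r^2 := by
      simp [Matrix.det_fin_two_of]; ring
    have hd : (0:ℝ) < 1 - r^2 := by nlinarith
    set c : ℝ := (1 - r^2)⁻¹ with hc
    have hcpos : 0 < c := inv_pos.2 hd
    have hinv : (!![1, r; r, 1] : Matrix (Fin 2) (Fin 2) ℝ)⁻¹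
        = !![c, -(r * c); -(r * c), c] := by
      rw [Matrix.inv_def, hdet, Matrix.adjugate_fin_two_of, Ring.inverse_eq_inv']
      ext i j
      fin_cases i <;> fin_cases j <;> simp [hc] <;> ring
    rw [condNum, hinv, norm_sym 1 r zero_le_one, norm_sym c (-(r * c)) hcpos.le]
    rw [_root_.abs_of_nonneg hr0, abs_neg, _root_.abs_of_nonneg (mul_nonneg hr0 hcpos.le)]
    have h1r : 1 - r ≠ 0 := by linarith
    have h1r' : 1 + r ≠ 0 := by linarith
    have : c = ((1-r)*(1+r))⁻¹ := by rw [hc]; ring_nf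
    rw [this, hr]
    have : ω + 1 ≠ 0 := by linarith
    field_simp
    ring
  · have h1I : (1 : ℂ) + I ≠ 0 := by
      intro h
      have := congrArg Complex.im h
      simp at this
    have hω1' : (ω : ℂ) + 1 ≠ 0 := by
      intro h
      have := congrArg Complex.re h
      simp at this
      linarith
    have hω1'' : (1 : ℂ) + ω ≠ 0 := by rwa [add_comm]
    rw [hr]
    push_cast
    field_simp
    ring
end

section
/- If $A = (a_{ij}) = B + iC$ is accretive-dissipative (i.e. $B,C$ Hermitian positive definite), then $\max_{i,j}|a_{ij}| \le \sqrt{2}\,\max_i |a_{ii}|$. -/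
open Matrix
open scoped ComplexOrder

lemma aux_diag {m : Type*} [Fintype m] [DecidableEq m]
    {M : Matrix m m ℂ} (hM : M.PosDef) (i : m) :
    0 < (M i i).re ∧ (M i i).im = 0 := by
  have h := (posDef_iff_dotProduct_mulVec.mp hM).2 (x := Pi.single i 1) (by intro h; simpa using congrFun h i)
  rw [mulVec_single] at h
  simp only [MulOpposite.op_one, one_smul] at h
  change 0 < star (Pi.single i (1:ℂ)) ⬝ᵥ (fun k => M k i) at h
  have : star (Pi.single i (1:ℂ)) ⬝ᵥ (fun k => M k i) = M i i := by
    rw [← Pi.single_star, single_dotProduct]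
    simp
  rw [this] at h
  rw [Complex.lt_def] at h
  exact ⟨h.1, h.2.symm⟩

lemma aux_cs {m : Type*} [Fintype m] [DecidableEq m]
    {M : Matrix m m ℂ} (hM : M.PosDef) (i j : m) :
    Complex.normSq (M i j) ≤ (M i i).re * (M j j).re := by
  rcases eq_or_ne i j with rfl | hij
  · have h := aux_diag hM i
    rw [Complex.normSq_apply, h.2]
    nlinarith [h.1]
  · have key : ∀ t : ℝ, 0 ≤ (M i i).re * (t * t) + (-2 * Complex.normSq (M i j)) * t
        + Complex.normSq (M i j) * (M j j).re := by
      intro t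
      set c := -(starRingEnd ℂ) (M i j) with hc
      set x : m → ℂ := Pi.single i (t : ℂ) + Pi.single j c with hx
      have h := (posSemidef_iff_dotProduct_mulVec.mp hM.posSemidef).2 x
      have hexp : star x ⬝ᵥ M *ᵥ x
          = (t:ℂ) * (M i i) * t + (t:ℂ) * (M i j) * c
            + star c * M j i * t + star c * (M j j) * c := by
        rw [hx]
        rw [star_add, ← Pi.single_star, ← Pi.single_star, mulVec_add,
          mulVec_single, mulVec_single, add_dotProduct, dotProduct_add, dotProduct_add]
        simp only [single_dotProduct]
        simp [hij, hij.symm, mul_comm, mul_assoc, mul_left_comm]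
        ring
      rw [hexp] at h
      have hji : M j i = (starRingEnd ℂ) (M i j) := (hM.1.apply j i).symm
      rw [Complex.le_def] at h
      have h1 := h.1
      have hii := (aux_diag hM i).2
      have hjj := (aux_diag hM j).2
      simp only [hc, hji, star_neg, RCLike.star_def, Complex.conj_conj, Complex.add_re,
        Complex.mul_re, Complex.mul_im, Complex.neg_re, Complex.neg_im, Complex.conj_re,
        Complex.conj_im, Complex.ofReal_re, Complex.ofReal_im, Complex.zero_re] at h1
      rw [Complex.normSq_apply]
      nlinarith [h1, hii, hjj]
    have hd := discrim_le_zero (K := ℝ) key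
    rw [discrim] at hd
    have hp := mul_pos (aux_diag hM i).1 (aux_diag hM j).1
    by_contra hlt
    push_neg at hlt
    have hqpos : 0 < Complex.normSq (M i j) := hp.trans hlt
    nlinarith [hd, mul_lt_mul_of_pos_right hlt hqpos]

/-- For an accretive-dissipative matrix, the largest entry in modulus is at most `√2` times
the largest diagonal entry in modulus. -/
theorem ad_entry_bound {n : ℕ} (A : Matrix (Fin (n + 1)) (Fin (n + 1)) ℂ)
    (hB : ((1 / 2 : ℂ) • (A + Aᴴ)).PosDef)
    (hC : ((1 / (2 * Complex.I) : ℂ) • (A - Aᴴ)).PosDef) :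
    ∀ i j, ‖A i j‖ ≤
      Real.sqrt 2 * Finset.univ.sup' Finset.univ_nonempty (fun k => ‖A k k‖) := by
  intro i j
  set B := ((1 / 2 : ℂ) • (A + Aᴴ)) with hBdef
  set C := ((1 / (2 * Complex.I) : ℂ) • (A - Aᴴ)) with hCdef
  have hA : ∀ k l, A k l = B k l + Complex.I * C k l := by
    intro k l
    simp only [hBdef, hCdef, Matrix.smul_apply, Matrix.add_apply, Matrix.sub_apply,
      conjTranspose_apply, smul_eq_mul]
    field_simp
    ring
  set r : Fin (n+1) → ℝ := fun k => (B k k).re with hr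
  set s : Fin (n+1) → ℝ := fun k => (C k k).re with hs
  have hrpos : ∀ k, 0 < r k := fun k => (aux_diag hB k).1
  have hspos : ∀ k, 0 < s k := fun k => (aux_diag hC k).1
  have hrim : ∀ k, (B k k).im = 0 := fun k => (aux_diag hB k).2
  have hsim : ∀ k, (C k k).im = 0 := fun k => (aux_diag hC k).2
  have hdiag : ∀ k, ‖A k k‖ ^ 2 = r k ^ 2 + s k ^ 2 := by
    intro k
    rw [Complex.sq_norm, Complex.normSq_apply, hA k k]
    simp [Complex.add_re, Complex.add_im, Complex.mul_re, Complex.mul_im,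
      hrim k, hsim k, hr, hs]
    ring
  set D := Finset.univ.sup' Finset.univ_nonempty (fun k => ‖A k k‖) with hD
  have hDk : ∀ k, ‖A k k‖ ≤ D := fun k =>
    Finset.le_sup' (fun k => ‖A k k‖) (Finset.mem_univ k)
  have hD0 : 0 ≤ D := le_trans (norm_nonneg _) (hDk i)
  -- cross bound
  have hb := aux_cs hB i j
  have hc := aux_cs hC i j
  have habs : ‖A i j‖ ≤ ‖B i j‖ + ‖C i j‖ := by
    rw [hA i j]
    refine le_trans (norm_add_le _ _) ?_
    rw [norm_mul, Complex.norm_I, one_mul]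
  have h1 : ‖A i j‖ ^ 2 ≤ 2 * (r i * r j + s i * s j) := by
    have hb' : ‖B i j‖ ^ 2 ≤ r i * r j := by rwa [Complex.sq_norm]
    have hc' : ‖C i j‖ ^ 2 ≤ s i * s j := by rwa [Complex.sq_norm]
    nlinarith [norm_nonneg (A i j), norm_nonneg (B i j),
      norm_nonneg (C i j), sq_nonneg (‖B i j‖ - ‖C i j‖)]
  have h2 : r i * r j + s i * s j ≤ D ^ 2 := by
    have hii : r i ^ 2 + s i ^ 2 ≤ D ^ 2 := by
      rw [← hdiag i]; exact pow_le_pow_left₀ (norm_nonneg _) (hDk i) 2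
    have hjj : r j ^ 2 + s j ^ 2 ≤ D ^ 2 := by
      rw [← hdiag j]; exact pow_le_pow_left₀ (norm_nonneg _) (hDk j) 2
    nlinarith [sq_nonneg (r i * s j - s i * r j), hrpos i, hrpos j, hspos i, hspos j,
      sq_nonneg ((r i^2 + s i^2) - (r j^2 + s j^2)), hD0]
  have h3 : ‖A i j‖ ^ 2 ≤ (Real.sqrt 2 * D) ^ 2 := by
    rw [mul_pow, Real.sq_sqrt (by norm_num : (2:ℝ) ≥ 0)]
    nlinarith [h1, h2]
  exact (pow_le_pow_iff_left₀ (norm_nonneg _) (by positivity) two_ne_zero).mp h3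
end

section
/- Diagonal maximality fails for accretive-dissipative matrices: for $1/\sqrt{2} < r < 1$, the matrix $A_r = \begin{bmatrix}1+i & 2r \\ 0 & 1+i\end{bmatrix}$ has Hermitian part $\begin{bmatrix}1&r\\r&1\end{bmatrix}$ and skew-Hermitian part (divided by $i$) $\begin{bmatrix}1&-ir\\ir&1\end{bmatrix}$, both positive definite, yet $|(A_r)_{12}| = 2r > \sqrt{2} = |(A_r)_{11}| = |(A_r)_{22}|$. -/
open Matrix Complex
open scoped ComplexOrder

lemma aux_pos (r t : ℝ) (hr0 : 0 < r) (hr : r < 1) (a b : ℂ)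
    (h : ¬(a = 0 ∧ b = 0)) (ht : |t| ≤ ‖a‖ * ‖b‖) :
    0 < Complex.normSq a + Complex.normSq b + 2 * r * t := by
  have ha := Complex.normSq_nonneg a
  have hb := Complex.normSq_nonneg b
  have h2 : 0 < Complex.normSq a + Complex.normSq b := by
    rcases not_and_or.mp h with h' | h'
    · have : 0 < Complex.normSq a := Complex.normSq_pos.mpr h'
      linarith
    · have : 0 < Complex.normSq b := Complex.normSq_pos.mpr h'
      linarith
  have hab : ‖a‖ * ‖b‖ ≤ (Complex.normSq a + Complex.normSq b) / 2 := by
    have h1 : (‖a‖ - ‖b‖)^2 ≥ 0 := sq_nonneg _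
    have e1 : ‖a‖ ^ 2 = Complex.normSq a := Complex.sq_norm a
    have e2 : ‖b‖ ^ 2 = Complex.normSq b := Complex.sq_norm b
    nlinarith
  have ht' : -t ≤ |t| := neg_le_abs t
  nlinarith [abs_nonneg t]

lemma quad1 (r : ℝ) (x : Fin 2 → ℂ) :
    dotProduct (star x) ((!![1, (r:ℂ); (r:ℂ), 1]) *ᵥ x) =
      ((Complex.normSq (x 0) + Complex.normSq (x 1) + 2*r*((starRingEnd ℂ (x 0) * x 1).re) : ℝ) : ℂ) := by
  simp [dotProduct, Matrix.mulVec, Fin.sum_univ_two, Complex.ext_iff, Complex.normSq_apply]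
  constructor <;> ring

lemma quad2 (r : ℝ) (x : Fin 2 → ℂ) :
    dotProduct (star x) ((!![1, -I*(r:ℂ); I*(r:ℂ), 1]) *ᵥ x) =
      ((Complex.normSq (x 0) + Complex.normSq (x 1) + 2*r*((starRingEnd ℂ (x 0) * x 1).im) : ℝ) : ℂ) := by
  simp [dotProduct, Matrix.mulVec, Fin.sum_univ_two, Complex.ext_iff, Complex.normSq_apply]
  constructor <;> ring

lemma vec_ne (x : Fin 2 → ℂ) (hx : x ≠ 0) : ¬(x 0 = 0 ∧ x 1 = 0) := by
  rintro ⟨h0, h1⟩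
  apply hx
  ext i
  fin_cases i <;> simpa

/-- Diagonal maximality fails for accretive-dissipative matrices: for `1/√2 < r < 1` the matrix
`A_r = [[1+i, 2r], [0, 1+i]]` is accretive-dissipative but its largest entry in modulus is
off-diagonal. -/
theorem ad_no_diagonal_max (r : ℝ) (hr₁ : 1 / Real.sqrt 2 < r) (hr₂ : r < 1)
    (A : Matrix (Fin 2) (Fin 2) ℂ) (hA : A = !![1 + I, 2 * r; 0, 1 + I]) :
    (1 / 2 : ℂ) • (A + Aᴴ) = !![1, (r : ℂ); (r : ℂ), 1] ∧
    (1 / (2 * I) : ℂ) • (A - Aᴴ) = !![1, -I * r; I * r, 1] ∧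
    ((1 / 2 : ℂ) • (A + Aᴴ)).PosDef ∧
    ((1 / (2 * I) : ℂ) • (A - Aᴴ)).PosDef ∧
    ‖A 0 1‖ = 2 * r ∧
    Real.sqrt 2 < 2 * r ∧
    ‖A 0 0‖ = Real.sqrt 2 ∧
    ‖A 1 1‖ = Real.sqrt 2 := by
  subst hA
  have hs2 : (0:ℝ) < Real.sqrt 2 := Real.sqrt_pos.mpr (by norm_num)
  have hs2' : Real.sqrt 2 * Real.sqrt 2 = 2 := Real.mul_self_sqrt (by norm_num)
  have hr0 : 0 < r := lt_trans (by positivity) hr₁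
  have hH : (1 / 2 : ℂ) • (!![1 + I, 2 * (r:ℂ); 0, 1 + I] + !![1 + I, 2 * (r:ℂ); 0, 1 + I]ᴴ)
      = !![1, (r : ℂ); (r : ℂ), 1] := by
    ext i j
    fin_cases i <;> fin_cases j <;>
      simp [Matrix.conjTranspose_apply, Complex.ext_iff] <;> ring
  have hS : (1 / (2 * I) : ℂ) • (!![1 + I, 2 * (r:ℂ); 0, 1 + I] - !![1 + I, 2 * (r:ℂ); 0, 1 + I]ᴴ)
      = !![1, -I * r; I * r, 1] := by
    ext i j
    fin_cases i <;> fin_cases j <;>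
      simp [Matrix.conjTranspose_apply, Complex.ext_iff, Complex.div_re, Complex.div_im,
        Complex.normSq_apply] <;> ring_nf
  refine ⟨hH, hS, ?_, ?_, ?_, ?_, ?_, ?_⟩
  · rw [hH]
    refine Matrix.PosDef.of_dotProduct_mulVec_pos ?_ ?_
    · ext i j
      fin_cases i <;> fin_cases j <;> simp [Matrix.conjTranspose_apply]
    · intro x hx
      rw [quad1]
      rw [show (0:ℂ) = ((0:ℝ):ℂ) by norm_num, Complex.real_lt_real]
      apply aux_pos r _ hr0 hr₂ _ _ (vec_ne x hx)
      calc |(starRingEnd ℂ (x 0) * x 1).re| ≤ ‖starRingEnd ℂ (x 0) * x 1‖ :=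
            Complex.abs_re_le_norm _
        _ = ‖x 0‖ * ‖x 1‖ := by
            rw [norm_mul, Complex.norm_conj]
  · rw [hS]
    refine Matrix.PosDef.of_dotProduct_mulVec_pos ?_ ?_
    · ext i j
      fin_cases i <;> fin_cases j <;> simp [Matrix.conjTranspose_apply]
    · intro x hx
      rw [quad2]
      rw [show (0:ℂ) = ((0:ℝ):ℂ) by norm_num, Complex.real_lt_real]
      apply aux_pos r _ hr0 hr₂ _ _ (vec_ne x hx)
      calc |(starRingEnd ℂ (x 0) * x 1).im| ≤ ‖starRingEnd ℂ (x 0) * x 1‖ :=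
            Complex.abs_im_le_norm _
        _ = ‖x 0‖ * ‖x 1‖ := by
            rw [norm_mul, Complex.norm_conj]
  · simp
    linarith
  · have : 1 < r * Real.sqrt 2 := by
      rwa [div_lt_iff₀ hs2] at hr₁
    nlinarith
  · simp [Complex.norm_def, Complex.normSq_apply]
    norm_num
  · simp [Complex.norm_def, Complex.normSq_apply]
    norm_num
end
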